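/- arXiv:1307.7454 — 3 statements merged into one kernel-verified Lean document; each statement's English description precedes it below -/
import Mathlib

section
/- Let ε ∈ (0,1] and k ≥ 1 be an integer, and run the Misra–Gries algorithm with ℓ = ⌈k + k/ε⌉ counters on a stream of n items. Then F_k − F̂_k ≤ ε R_k, and moreover f_j − f̂_j ≤ (ε/k) R_k for every item j. -/
/-- One step of the Misra–Gries algorithm with `ℓ` counters.  The state is the
function giving the current counter value of each item (an item is a stored
label iff its counter is positive).  If the arriving item `a` matches a stored
label, its counter is incremented; otherwise, if fewer than `ℓ` counters are
in use, `a` is stored with counter `1`; otherwise all counters are decremented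
by `1`.  Returns the new state together with whether a decrement occurred. -/
def mgStep (u ℓ : ℕ) (s : Fin u → ℕ) (a : Fin u) : (Fin u → ℕ) × Bool :=
  if 0 < s a then (Function.update s a (s a + 1), false)
  else if (Finset.univ.filter fun j => 0 < s j).card < ℓ then
    (Function.update s a 1, false)
  else ((fun j => s j - 1), true)

/-- Run the Misra–Gries algorithm with `ℓ` counters on a stream, starting from
all counters empty.  Returns the final counter values `f̂` together with the
number `r` of stream steps at which the decrement operation occurred. -/
def mgRun (u ℓ : ℕ) (stream : List (Fin u)) : (Fin u → ℕ) × ℕ :=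
  stream.foldl
    (fun p a => ((mgStep u ℓ p.1 a).1, p.2 + if (mgStep u ℓ p.1 a).2 then 1 else 0))
    ((fun _ => 0), 0)

/-!
Let `r` be the number of decrement steps. Each item loses at most one unit of its count per
decrement, so `f_j - f̂_j ≤ r`. A decrement discards the arriving item together with one unit
from each of the `ℓ` full counters, so `r (ℓ + 1) ≤ n - ∑ f̂ ≤ k r + R_k`, where the second
inequality bounds the top `k` items with the first fact. Since `ℓ ≥ k + k/ε`, this gives
`k r ≤ ε R_k`, and both claims follow.
-/

open Finset

theorem List.sum_count_eq_length {α : Type*} [Fintype α] [DecidableEq α] (l : List α) :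
    ∑ a, l.count a = l.length := by
  rw [← List.sum_toFinset_count_eq_length]
  exact (sum_subset (subset_univ _) fun a _ ha => List.count_eq_zero.mpr (by simpa using ha)).symm

namespace MisraGries

variable {u ℓ : ℕ}

theorem mgStep_apply_add_le (s : Fin u → ℕ) (a j : Fin u) :
    s j + (if a = j then 1 else 0) ≤
      (mgStep u ℓ s a).1 j + (if (mgStep u ℓ s a).2 then 1 else 0) := by
  by_cases hpos : 0 < s a
  · simp only [mgStep, if_pos hpos, Function.update_apply]
    split_ifs <;> subst_vars <;> omega
  by_cases hfree : #{j | 0 < s j} < ℓ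
  · simp only [mgStep, if_neg hpos, if_pos hfree, Function.update_apply]
    split_ifs <;> subst_vars <;> omega
  · simp only [mgStep, if_neg hpos, if_neg hfree, if_true]
    split_ifs <;> subst_vars <;> omega

theorem sum_mgStep_add_le (s : Fin u → ℕ) (a : Fin u) :
    ∑ j, (mgStep u ℓ s a).1 j + (if (mgStep u ℓ s a).2 then ℓ + 1 else 0) ≤ ∑ j, s j + 1 := by
  have hsplit : s a + ∑ j ∈ univ.erase a, s j = ∑ j, s j := add_sum_erase _ s (mem_univ a)
  by_cases hpos : 0 < s a
  · simp only [mgStep, if_pos hpos, sum_update_of_mem (mem_univ a), sdiff_singleton_eq_erase,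
      Bool.false_eq_true, if_false]
    omega
  by_cases hfree : #{j | 0 < s j} < ℓ
  · simp only [mgStep, if_neg hpos, if_pos hfree, sum_update_of_mem (mem_univ a),
      sdiff_singleton_eq_erase, Bool.false_eq_true, if_false]
    omega
  · have hdec : ∑ j, s j = ∑ j, (s j - 1) + #{j | 0 < s j} := by
      rw [card_filter, ← sum_add_distrib]
      exact sum_congr rfl fun j _ => by split_ifs <;> omega
    simp only [mgStep, if_neg hpos, if_neg hfree, if_true]
    omega

theorem mgRun_append_singleton (l : List (Fin u)) (a : Fin u) :
    mgRun u ℓ (l ++ [a]) =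
      ((mgStep u ℓ (mgRun u ℓ l).1 a).1,
        (mgRun u ℓ l).2 + if (mgStep u ℓ (mgRun u ℓ l).1 a).2 then 1 else 0) := by
  rw [mgRun, List.foldl_append]
  rfl

theorem count_le_mgRun_add (l : List (Fin u)) (j : Fin u) :
    l.count j ≤ (mgRun u ℓ l).1 j + (mgRun u ℓ l).2 := by
  induction l using List.reverseRecOn with
  | nil => simp
  | append_singleton l a ih =>
    have hstep := mgStep_apply_add_le (ℓ := ℓ) (mgRun u ℓ l).1 a j
    rw [mgRun_append_singleton, List.count_append, List.count_singleton]
    simp only [beq_iff_eq]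
    split_ifs at hstep ⊢ <;> omega

theorem sum_mgRun_add_mul_le_length (l : List (Fin u)) :
    ∑ j, (mgRun u ℓ l).1 j + (mgRun u ℓ l).2 * (ℓ + 1) ≤ l.length := by
  induction l using List.reverseRecOn with
  | nil => simp [mgRun]
  | append_singleton l a ih =>
    have hstep := sum_mgStep_add_le (ℓ := ℓ) (mgRun u ℓ l).1 a
    rw [mgRun_append_singleton, List.length_append, List.length_singleton]
    split_ifs at hstep ⊢ <;> simp only [add_mul, one_mul, add_zero] at * <;> omega

theorem sum_count_le_sum_mgRun_add (l : List (Fin u)) (A : Finset (Fin u)) :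
    ∑ j ∈ A, l.count j ≤ ∑ j ∈ A, (mgRun u ℓ l).1 j + #A * (mgRun u ℓ l).2 := by
  calc ∑ j ∈ A, l.count j ≤ ∑ j ∈ A, ((mgRun u ℓ l).1 j + (mgRun u ℓ l).2) :=
        sum_le_sum fun j _ => count_le_mgRun_add l j
    _ = ∑ j ∈ A, (mgRun u ℓ l).1 j + #A * (mgRun u ℓ l).2 := by
        rw [sum_add_distrib, sum_const, smul_eq_mul]

theorem mgRun_decrements_mul_succ_le (l : List (Fin u)) (A : Finset (Fin u)) :
    (mgRun u ℓ l).2 * (ℓ + 1) ≤ #A * (mgRun u ℓ l).2 + ∑ j ∈ Aᶜ, l.count j := by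
  have hlen : ∑ j ∈ A, l.count j + ∑ j ∈ Aᶜ, l.count j = l.length := by
    rw [sum_add_sum_compl, List.sum_count_eq_length]
  have hsub : ∑ j ∈ A, (mgRun u ℓ l).1 j ≤ ∑ j, (mgRun u ℓ l).1 j :=
    sum_le_sum_of_subset (subset_univ A)
  have := sum_count_le_sum_mgRun_add (ℓ := ℓ) l A
  have := sum_mgRun_add_mul_le_length (ℓ := ℓ) l
  omega

theorem mul_mgRun_decrements_le (l : List (Fin u)) (A : Finset (Fin u)) {k : ℕ} (hA : #A ≤ k)
    {ε : ℝ} (hε : 0 < ε) (hℓ : k + k / ε ≤ ℓ) :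
    k * (mgRun u ℓ l).2 ≤ ε * ∑ j ∈ Aᶜ, (l.count j : ℝ) := by
  have hdec : ((mgRun u ℓ l).2 : ℝ) * (ℓ + 1) ≤
      #A * (mgRun u ℓ l).2 + ∑ j ∈ Aᶜ, (l.count j : ℝ) := by
    exact_mod_cast mgRun_decrements_mul_succ_le l A
  have hAk : (#A : ℝ) ≤ k := by exact_mod_cast hA
  set r : ℝ := ((mgRun u ℓ l).2 : ℝ)
  have hr : 0 ≤ r := Nat.cast_nonneg _
  calc (k : ℝ) * r = ε * (r * (k / ε)) := by field_simp
    _ ≤ ε * ∑ j ∈ Aᶜ, (l.count j : ℝ) := by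
        gcongr
        linarith [mul_le_mul_of_nonneg_left hℓ hr, mul_le_mul_of_nonneg_left hAk hr]

end MisraGries

open MisraGries in
theorem misraGries_relative_error_general (u k : ℕ) (hk : 1 ≤ k)
    (ε : ℝ) (hε0 : 0 < ε)
    (ℓ : ℕ) (hℓdef : ℓ = ⌈(k : ℝ) + (k : ℝ) / ε⌉₊)
    (stream : List (Fin u)) :
    (∑ j ∈ Finset.univ.filter (fun j : Fin u => (j : ℕ) < k),
        (stream.count j : ℝ)) -
      (∑ j ∈ Finset.univ.filter (fun j : Fin u => (j : ℕ) < k),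
        ((mgRun u ℓ stream).1 j : ℝ)) ≤
      ε * ∑ j ∈ Finset.univ.filter (fun j : Fin u => k ≤ (j : ℕ)),
            (stream.count j : ℝ) ∧
    ∀ j : Fin u,
      (stream.count j : ℝ) - ((mgRun u ℓ stream).1 j : ℝ) ≤
        (ε / (k : ℝ)) * ∑ j ∈ Finset.univ.filter (fun j : Fin u => k ≤ (j : ℕ)),
              (stream.count j : ℝ) := by
  set A := univ.filter fun j : Fin u => (j : ℕ) < k
  have hAcompl : Aᶜ = univ.filter fun j : Fin u => k ≤ (j : ℕ) := by
    simp only [A, compl_filter, not_lt]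
  have hAcard : #A ≤ k := by simp [A, Fin.card_filter_val_lt]
  have hdec := mul_mgRun_decrements_le stream A hAcard hε0 (hℓdef ▸ Nat.le_ceil _)
  rw [hAcompl] at hdec
  have hk0 : (0 : ℝ) < k := by exact_mod_cast hk
  constructor
  · have hsum : ∑ j ∈ A, (stream.count j : ℝ) ≤
        ∑ j ∈ A, ((mgRun u ℓ stream).1 j : ℝ) + #A * (mgRun u ℓ stream).2 := by
      exact_mod_cast sum_count_le_sum_mgRun_add stream A
    have : (#A : ℝ) * (mgRun u ℓ stream).2 ≤ k * (mgRun u ℓ stream).2 := by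
      gcongr
    linarith
  · intro j
    have hj : (stream.count j : ℝ) - (mgRun u ℓ stream).1 j ≤ (mgRun u ℓ stream).2 := by
      have : (stream.count j : ℝ) ≤ (mgRun u ℓ stream).1 j + (mgRun u ℓ stream).2 := by
        exact_mod_cast count_le_mgRun_add stream j
      linarith
    rw [div_mul_eq_mul_div, le_div_iff₀ hk0]
    linarith [mul_le_mul_of_nonneg_right hj hk0.le]

/-- Let `ε ∈ (0,1]` and `k ≥ 1`, and run the Misra–Gries algorithm with
`ℓ = ⌈k + k/ε⌉` counters on a stream of `n` items (from universe `[u]`,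
indexed so that true frequencies `f_j` are non-increasing).  Then
`F_k - F̂_k ≤ ε R_k`, and moreover `f_j - f̂_j ≤ (ε/k) R_k` for every item `j`,
where `F_k = ∑_{j=1}^k f_j`, `F̂_k = ∑_{j=1}^k f̂_j` and
`R_k = ∑_{j=k+1}^u f_j`. -/
theorem misraGries_relative_error (u k : ℕ) (hk : 1 ≤ k)
    (ε : ℝ) (hε0 : 0 < ε) (hε1 : ε ≤ 1)
    (ℓ : ℕ) (hℓdef : ℓ = ⌈(k : ℝ) + (k : ℝ) / ε⌉₊)
    (stream : List (Fin u))
    (hsorted : ∀ i j : Fin u, i ≤ j → stream.count j ≤ stream.count i) :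
    (∑ j ∈ Finset.univ.filter (fun j : Fin u => (j : ℕ) < k),
        (stream.count j : ℝ)) -
      (∑ j ∈ Finset.univ.filter (fun j : Fin u => (j : ℕ) < k),
        ((mgRun u ℓ stream).1 j : ℝ)) ≤
      ε * ∑ j ∈ Finset.univ.filter (fun j : Fin u => k ≤ (j : ℕ)),
            (stream.count j : ℝ) ∧
    ∀ j : Fin u,
      (stream.count j : ℝ) - ((mgRun u ℓ stream).1 j : ℝ) ≤
        (ε / (k : ℝ)) * ∑ j ∈ Finset.univ.filter (fun j : Fin u => k ≤ (j : ℕ)),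
              (stream.count j : ℝ) :=
  misraGries_relative_error_general u k hk ε hε0 ℓ hℓdef stream
end

section
/- Let ε ∈ (0,1] and k ≥ 1 be an integer, and run the Misra–Gries algorithm with ℓ = ⌈k + 1/ε⌉ counters on a stream of n items. Then f_j − f̂_j ≤ ε R_k for every item j. -/
private lemma mg_card_top_le (u k : ℕ) :
    (Finset.univ.filter (fun j : Fin u => (j : ℕ) < k)).card ≤ k := by
  have : (Finset.univ.filter (fun j : Fin u => (j : ℕ) < k)).card ≤ (Finset.range k).card := by
    refine Finset.card_le_card_of_injOn (fun j => (j : ℕ)) ?_ ?_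
    · intro j hj
      simpa using hj
    · intro x _ y _ hxy
      exact Fin.ext hxy
  simpa using this

private lemma mg_step_inv (u ℓ k : ℕ) (hkℓ : k + 1 ≤ ℓ)
    (s : Fin u → ℕ) (r : ℕ) (c : Fin u → ℕ) (a : Fin u)
    (ih1 : ∀ j, c j ≤ s j + r)
    (ih2 : (∑ j ∈ Finset.univ.filter (fun j : Fin u => k ≤ (j : ℕ)), s j) + r * ℓ + r
      ≤ (∑ j ∈ Finset.univ.filter (fun j : Fin u => k ≤ (j : ℕ)), c j) + r * k) :
    (∀ j, c j + (if j = a then 1 else 0)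
        ≤ (mgStep u ℓ s a).1 j + (r + if (mgStep u ℓ s a).2 then 1 else 0)) ∧
    (∑ j ∈ Finset.univ.filter (fun j : Fin u => k ≤ (j : ℕ)), (mgStep u ℓ s a).1 j)
        + (r + if (mgStep u ℓ s a).2 then 1 else 0) * ℓ
        + (r + if (mgStep u ℓ s a).2 then 1 else 0)
      ≤ ((∑ j ∈ Finset.univ.filter (fun j : Fin u => k ≤ (j : ℕ)), c j)
          + (if a ∈ Finset.univ.filter (fun j : Fin u => k ≤ (j : ℕ)) then 1 else 0))
        + (r + if (mgStep u ℓ s a).2 then 1 else 0) * k := by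
  classical
  set T := Finset.univ.filter (fun j : Fin u => k ≤ (j : ℕ)) with hT
  have hupd : ∀ v : ℕ, v = s a + 1 →
      (∑ j ∈ T, Function.update s a v j) = (∑ j ∈ T, s j) + (if a ∈ T then 1 else 0) := by
    intro v hv
    by_cases hmem : a ∈ T
    · rw [Finset.sum_update_of_mem hmem, if_pos hmem]
      rw [← Finset.add_sum_erase T s hmem]
      have hTd : T \ {a} = T.erase a := by simp [Finset.erase_eq]
      rw [hTd]
      omega
    · rw [Finset.sum_update_of_notMem hmem, if_neg hmem]
      simp
  unfold mgStep
  by_cases h1 : 0 < s a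
  · rw [if_pos h1]
    simp only [Bool.false_eq_true, if_false, add_zero]
    constructor
    · intro j
      rcases eq_or_ne j a with rfl | hja
      · have := ih1 j
        simp only [Function.update_self, eq_self_iff_true, if_true]
        omega
      · rw [Function.update_of_ne hja, if_neg hja]
        have := ih1 j
        omega
    · rw [hupd _ rfl]
      omega
  · rw [if_neg h1]
    have h0 : s a = 0 := by omega
    by_cases h2 : (Finset.univ.filter fun j => 0 < s j).card < ℓ
    · rw [if_pos h2]
      simp only [Bool.false_eq_true, if_false, add_zero]
      constructor
      · intro j
        rcases eq_or_ne j a with rfl | hja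
        · have := ih1 j
          simp only [Function.update_self, eq_self_iff_true, if_true]
          omega
        · rw [Function.update_of_ne hja, if_neg hja]
          have := ih1 j
          omega
      · rw [hupd 1 (by omega)]
        omega
    · rw [if_neg h2]
      simp only [if_true]
      push_neg at h2
      have hsum : (∑ j ∈ T, (s j - 1)) + (T.filter fun j => 0 < s j).card
          = ∑ j ∈ T, s j := by
        rw [Finset.card_filter, ← Finset.sum_add_distrib]
        apply Finset.sum_congr rfl
        intro j _
        split_ifs with h <;> omega
      have hPT : ℓ + 1 ≤ (T.filter fun j => 0 < s j).card + k + (if a ∈ T then 1 else 0) := by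
        have hsplit := Finset.card_filter_add_card_filter_not
          (s := Finset.univ.filter (fun j : Fin u => 0 < s j))
          (p := fun j : Fin u => k ≤ (j : ℕ))
        have he1 : (Finset.univ.filter (fun j : Fin u => 0 < s j)).filter
            (fun j : Fin u => k ≤ (j : ℕ)) = T.filter (fun j => 0 < s j) := by
          rw [hT, Finset.filter_filter, Finset.filter_filter]
          apply Finset.filter_congr
          intro j _
          tauto
        rw [he1] at hsplit
        have htop := mg_card_top_le u k
        by_cases hmem : a ∈ T
        · have hsub : (Finset.univ.filter (fun j : Fin u => 0 < s j)).filter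
              (fun j : Fin u => ¬ k ≤ (j : ℕ))
              ⊆ Finset.univ.filter (fun j : Fin u => (j : ℕ) < k) := by
            intro x hx
            simp only [Finset.mem_filter, Finset.mem_univ, true_and, not_le] at hx ⊢
            exact hx.2
          have hcard := Finset.card_le_card hsub
          rw [if_pos hmem]
          omega
        · have hak : (a : ℕ) < k := by
            simp only [hT, Finset.mem_filter, Finset.mem_univ, true_and, not_le] at hmem
            exact hmem
          have hsub : (Finset.univ.filter (fun j : Fin u => 0 < s j)).filter
              (fun j : Fin u => ¬ k ≤ (j : ℕ))
              ⊆ (Finset.univ.filter (fun j : Fin u => (j : ℕ) < k)).erase a := by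
            intro x hx
            simp only [Finset.mem_filter, Finset.mem_univ, true_and, not_le,
              Finset.mem_erase] at hx ⊢
            refine ⟨?_, hx.2⟩
            rintro rfl
            omega
          have hcard := Finset.card_le_card hsub
          have hamem : a ∈ Finset.univ.filter (fun j : Fin u => (j : ℕ) < k) := by
            simp [hak]
          have herase := Finset.card_erase_of_mem hamem
          have h1le : 1 ≤ (Finset.univ.filter (fun j : Fin u => (j : ℕ) < k)).card :=
            Finset.card_pos.mpr ⟨a, hamem⟩
          rw [if_neg hmem]
          omega
      constructor
      · intro j
        have := ih1 j
        rcases eq_or_ne j a with rfl | hja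
        · simp only [eq_self_iff_true, if_true]
          omega
        · rw [if_neg hja]
          omega
      · have hexp : (r + 1) * ℓ = r * ℓ + ℓ := by ring
        have hexp2 : (r + 1) * k = r * k + k := by ring
        rcases (em (a ∈ T)) with hmem | hmem
        · rw [if_pos hmem] at hPT ⊢
          omega
        · rw [if_neg hmem] at hPT ⊢
          omega

private lemma mg_inv (u ℓ k : ℕ) (hkℓ : k + 1 ≤ ℓ) (l : List (Fin u)) :
    (∀ j, l.count j ≤ (mgRun u ℓ l).1 j + (mgRun u ℓ l).2) ∧
    (∑ j ∈ Finset.univ.filter (fun j : Fin u => k ≤ (j : ℕ)), (mgRun u ℓ l).1 j)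
      + (mgRun u ℓ l).2 * ℓ + (mgRun u ℓ l).2
      ≤ (∑ j ∈ Finset.univ.filter (fun j : Fin u => k ≤ (j : ℕ)), l.count j)
        + (mgRun u ℓ l).2 * k := by
  classical
  induction l using List.reverseRecOn with
  | nil => simp [mgRun]
  | append_singleton l a ih =>
    obtain ⟨ih1, ih2⟩ := ih
    have hrun : mgRun u ℓ (l ++ [a]) =
        ((mgStep u ℓ (mgRun u ℓ l).1 a).1,
          (mgRun u ℓ l).2 + if (mgStep u ℓ (mgRun u ℓ l).1 a).2 then 1 else 0) := by
      unfold mgRun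
      rw [List.foldl_append, List.foldl_cons, List.foldl_nil]
    have hcnt : ∀ j : Fin u, (l ++ [a]).count j = l.count j + (if j = a then 1 else 0) := by
      intro j
      rw [List.count_append]
      rcases eq_or_ne j a with rfl | h
      · simp
      · simp [h, h.symm, List.count_singleton]
    have hcntsum : (∑ j ∈ Finset.univ.filter (fun j : Fin u => k ≤ (j : ℕ)), (l ++ [a]).count j)
        = (∑ j ∈ Finset.univ.filter (fun j : Fin u => k ≤ (j : ℕ)), l.count j)
          + (if a ∈ Finset.univ.filter (fun j : Fin u => k ≤ (j : ℕ)) then 1 else 0) := by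
      simp only [hcnt]
      rw [Finset.sum_add_distrib, Finset.sum_ite_eq' _ a (fun _ => 1)]
    obtain ⟨h1, h2⟩ := mg_step_inv u ℓ k hkℓ (mgRun u ℓ l).1 (mgRun u ℓ l).2
      (fun j => l.count j) a ih1 ih2
    rw [hrun]
    constructor
    · intro j
      rw [hcnt j]
      exact h1 j
    · rw [hcntsum]
      exact h2

/-- Let `ε ∈ (0,1]` and `k ≥ 1`, and run the Misra–Gries algorithm with
`ℓ = ⌈k + 1/ε⌉` counters on a stream of `n` items (from universe `[u]`,
indexed so that true frequencies `f_j` are non-increasing).  Then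
`f_j - f̂_j ≤ ε R_k` for every item `j`, where `R_k = ∑_{j=k+1}^u f_j`. -/
theorem misraGries_pointwise_error (u k : ℕ) (hk : 1 ≤ k)
    (ε : ℝ) (hε0 : 0 < ε) (hε1 : ε ≤ 1)
    (ℓ : ℕ) (hℓdef : ℓ = ⌈(k : ℝ) + 1 / ε⌉₊)
    (stream : List (Fin u))
    (hsorted : ∀ i j : Fin u, i ≤ j → stream.count j ≤ stream.count i) :
    ∀ j : Fin u,
      (stream.count j : ℝ) - ((mgRun u ℓ stream).1 j : ℝ) ≤
        ε * ∑ j ∈ Finset.univ.filter (fun j : Fin u => k ≤ (j : ℕ)),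
              (stream.count j : ℝ) := by
  
  intro j
  have hceil : ((k : ℝ) + 1 / ε) ≤ (ℓ : ℝ) := hℓdef ▸ Nat.le_ceil _
  have hinv1 : (1 : ℝ) ≤ 1 / ε := one_le_one_div hε0 hε1
  have hℓk : k + 1 ≤ ℓ := by
    have : ((k : ℝ) + 1) ≤ (ℓ : ℝ) := by linarith
    exact_mod_cast this
  obtain ⟨h1, h2⟩ := mg_inv u ℓ k hℓk stream
  set r := (mgRun u ℓ stream).2 with hr
  have hRcast : ((∑ j ∈ Finset.univ.filter (fun j : Fin u => k ≤ (j : ℕ)),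
      stream.count j : ℕ) : ℝ)
      = ∑ j ∈ Finset.univ.filter (fun j : Fin u => k ≤ (j : ℕ)), (stream.count j : ℝ) := by
    push_cast
    rfl
  set R : ℝ := ∑ j ∈ Finset.univ.filter (fun j : Fin u => k ≤ (j : ℕ)),
      (stream.count j : ℝ) with hR
  have hRnonneg : 0 ≤ R := Finset.sum_nonneg fun _ _ => by positivity
  have h2' : (r : ℝ) * ℓ + r ≤ R + r * k := by
    have := h2
    have hcast : ((∑ j ∈ Finset.univ.filter (fun j : Fin u => k ≤ (j : ℕ)),
        (mgRun u ℓ stream).1 j) + r * ℓ + r : ℝ)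
        ≤ ((∑ j ∈ Finset.univ.filter (fun j : Fin u => k ≤ (j : ℕ)),
            stream.count j) + r * k : ℝ) := by exact_mod_cast (by exact_mod_cast this)
    have hs : (0 : ℝ) ≤ ((∑ j ∈ Finset.univ.filter (fun j : Fin u => k ≤ (j : ℕ)),
        (mgRun u ℓ stream).1 j : ℕ) : ℝ) := by positivity
    rw [hRcast] at hcast
    linarith
  have hrR : (r : ℝ) ≤ ε * R := by
    have hmul : (r : ℝ) * (1 / ε) ≤ (r : ℝ) * ((ℓ : ℝ) + 1 - k) := by
      apply mul_le_mul_of_nonneg_left _ (Nat.cast_nonneg r)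
      linarith
    have hstep : (r : ℝ) * ((ℓ : ℝ) + 1 - k) ≤ R := by nlinarith
    have : (r : ℝ) * (1 / ε) ≤ R := le_trans hmul hstep
    have hmul2 := mul_le_mul_of_nonneg_left this hε0.le
    have heq : ε * ((r : ℝ) * (1 / ε)) = r := by
      field_simp
    linarith [heq ▸ hmul2]
  have hcj : (stream.count j : ℝ) ≤ ((mgRun u ℓ stream).1 j : ℝ) + r := by
    exact_mod_cast h1 j
  linarith
end

section
/- Let Q be the output of the Frequent Directions algorithm run on an n×d matrix A with parameter ℓ, and let Δ = ∑_{i=1}^n δ_i. Then ℓΔ = ‖A‖_F² − ‖Q‖_F², and for every unit vector x ∈ ℝ^d, 0 ≤ ‖Ax‖² − ‖Qx‖² ≤ ‖A‖_F²/ℓ. -/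
open Matrix

/-- The squared Euclidean norm of a vector in `ℝ^m`. -/
noncomputable def sqNorm {m : ℕ} (v : Fin m → ℝ) : ℝ := ∑ i, v i ^ 2

/-- The squared Frobenius norm of a real matrix. -/
noncomputable def frobSq {m p : ℕ} (M : Matrix (Fin m) (Fin p) ℝ) : ℝ :=
  ∑ i, ∑ j, M i j ^ 2

/-!
Each step of Frequent Directions inserts `aᵢ` into the zero last row of `Qⁱ⁻¹`, which raises
`‖Q‖_F²` by `‖aᵢ‖²` and `‖Qx‖²` by `⟨aᵢ, x⟩²`, and then shrinks: subtracting `δᵢ` from each of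
the `ℓ` squared singular values lowers `‖Q‖_F²` by `ℓ δᵢ` and `‖Qx‖²` by `δᵢ ‖Yᵢᵀ x‖²`, a
number in `[0, δᵢ]` by Bessel's inequality. Telescoping over the steps gives
`ℓ Δ = ‖A‖_F² - ‖Q‖_F²` and `‖Ax‖² - ‖Qx‖² = ∑ δᵢ ‖Yᵢᵀ x‖² ∈ [0, Δ]`, and `Δ ≤ ‖A‖_F² / ℓ`.
-/

theorem Fin.last_eq_sum_of_succ {M : Type*} [AddCommMonoid M] {n : ℕ} {f : Fin (n + 1) → M}
    {g : Fin n → M} (h0 : f 0 = 0) (hsucc : ∀ i, f i.succ = f i.castSucc + g i) :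
    f (Fin.last n) = ∑ i, g i := by
  induction n with
  | zero => simpa using h0
  | succ n ih =>
    rw [Fin.sum_univ_castSucc, ← Fin.succ_last, hsucc,
      ← ih (f := fun i => f i.castSucc) h0 fun i => by rw [← Fin.succ_castSucc]; exact hsucc _]

section

variable {m p : ℕ}

lemma sqNorm_eq_dotProduct (v : Fin m → ℝ) : sqNorm v = v ⬝ᵥ v := by
  simp only [sqNorm, dotProduct, sq]

lemma sqNorm_nonneg (v : Fin m → ℝ) : 0 ≤ sqNorm v :=
  Finset.sum_nonneg fun _ _ => sq_nonneg _

lemma sqNorm_mulVec_eq_sum (M : Matrix (Fin m) (Fin p) ℝ) (x : Fin p → ℝ) :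
    sqNorm (M *ᵥ x) = ∑ i, (M i ⬝ᵥ x) ^ 2 := rfl

lemma frobSq_eq_sum_sqNorm (M : Matrix (Fin m) (Fin p) ℝ) : frobSq M = ∑ i, sqNorm (M i) := rfl

lemma frobSq_nonneg (M : Matrix (Fin m) (Fin p) ℝ) : 0 ≤ frobSq M :=
  Finset.sum_nonneg fun _ _ => sqNorm_nonneg _

lemma frobSq_eq_trace (M : Matrix (Fin m) (Fin p) ℝ) : frobSq M = (M * Mᵀ).trace := by
  simp [frobSq, trace, mul_apply, sq]

lemma sqNorm_mulVec_of_orthogonal {Z : Matrix (Fin m) (Fin m) ℝ} (hZ : Zᵀ * Z = 1)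
    (v : Fin m → ℝ) : sqNorm (Z *ᵥ v) = sqNorm v := by
  rw [sqNorm_eq_dotProduct, sqNorm_eq_dotProduct, dotProduct_mulVec, ← mulVec_transpose,
    mulVec_mulVec, hZ, one_mulVec]

lemma frobSq_mul_of_orthogonal {Z : Matrix (Fin m) (Fin m) ℝ} (hZ : Zᵀ * Z = 1)
    (M : Matrix (Fin m) (Fin p) ℝ) : frobSq (Z * M) = frobSq M := by
  rw [frobSq_eq_trace, frobSq_eq_trace, transpose_mul, Matrix.mul_assoc, trace_mul_comm,
    Matrix.mul_assoc, Matrix.mul_assoc, hZ, Matrix.mul_one]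

lemma sqNorm_transpose_mulVec_le {Y : Matrix (Fin p) (Fin m) ℝ} (hY : Yᵀ * Y = 1)
    (x : Fin p → ℝ) : sqNorm (Yᵀ *ᵥ x) ≤ sqNorm x := by
  set u := Yᵀ *ᵥ x
  have hxu : x ⬝ᵥ (Y *ᵥ u) = u ⬝ᵥ u := by rw [dotProduct_mulVec, ← mulVec_transpose]
  have huu : (Y *ᵥ u) ⬝ᵥ (Y *ᵥ u) = u ⬝ᵥ u := by
    rw [dotProduct_mulVec, ← mulVec_transpose, mulVec_mulVec, hY, one_mulVec]
  have hpyth : sqNorm (x - Y *ᵥ u) = sqNorm x - sqNorm u := by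
    simp only [sqNorm_eq_dotProduct, sub_dotProduct, dotProduct_sub, huu, hxu,
      dotProduct_comm (Y *ᵥ u) x]
    ring
  linarith [sqNorm_nonneg (x - Y *ᵥ u)]

lemma frobSq_diagonal_mul_transpose {Y : Matrix (Fin p) (Fin m) ℝ} (hY : Yᵀ * Y = 1)
    (t : Fin m → ℝ) : frobSq (diagonal t * Yᵀ) = ∑ j, t j ^ 2 := by
  rw [frobSq_eq_trace, transpose_mul, transpose_transpose, diagonal_transpose, Matrix.mul_assoc,
    ← Matrix.mul_assoc Yᵀ, hY, Matrix.one_mul, diagonal_mul_diagonal, trace_diagonal]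
  simp only [sq]

lemma sqNorm_diagonal_mul_mulVec (t : Fin m → ℝ) (N : Matrix (Fin m) (Fin p) ℝ)
    (x : Fin p → ℝ) : sqNorm ((diagonal t * N) *ᵥ x) = ∑ j, t j ^ 2 * (N *ᵥ x) j ^ 2 := by
  simp only [sqNorm, ← mulVec_mulVec, mulVec_diagonal, mul_pow]

lemma diagonal_mul_row_eq_zero {t : Fin m → ℝ} {k : Fin m} (hk : t k = 0)
    (N : Matrix (Fin m) (Fin p) ℝ) : (diagonal t * N) k = 0 := by
  ext j
  simp [mul_apply, diagonal_apply, hk]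

lemma sum_updateRow_of_row_eq_zero {M : Matrix (Fin m) (Fin p) ℝ} {k : Fin m} (hk : M k = 0)
    {g : (Fin p → ℝ) → ℝ} (hg : g 0 = 0) (r : Fin p → ℝ) :
    ∑ i, g (M.updateRow k r i) = ∑ i, g (M i) + g r := by
  have hterm : ∀ i, g (M.updateRow k r i) = g (M i) + if i = k then g r else 0 := by
    intro i
    by_cases h : i = k <;> simp [h, hk, hg]
  simp [hterm, Finset.sum_add_distrib]

lemma frobSq_updateRow_of_row_eq_zero {M : Matrix (Fin m) (Fin p) ℝ} {k : Fin m}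
    (hk : M k = 0) (r : Fin p → ℝ) : frobSq (M.updateRow k r) = frobSq M + sqNorm r :=
  sum_updateRow_of_row_eq_zero hk (g := sqNorm) (by simp [sqNorm]) r

lemma sqNorm_updateRow_mulVec_of_row_eq_zero {M : Matrix (Fin m) (Fin p) ℝ} {k : Fin m}
    (hk : M k = 0) (r x : Fin p → ℝ) :
    sqNorm (M.updateRow k r *ᵥ x) = sqNorm (M *ᵥ x) + (r ⬝ᵥ x) ^ 2 :=
  sum_updateRow_of_row_eq_zero hk (g := fun v => (v ⬝ᵥ x) ^ 2) (by simp) r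

end

section Shrink

variable {m d : ℕ} {Q : Matrix (Fin m) (Fin d) ℝ} {k : Fin m} {a : Fin d → ℝ}
  {Z : Matrix (Fin m) (Fin m) ℝ} {Y : Matrix (Fin d) (Fin m) ℝ} {s : Fin m → ℝ} {δ : ℝ}

lemma frobSq_shrink (hZ : Zᵀ * Z = 1) (hY : Yᵀ * Y = 1) (hδ : ∀ j, δ ≤ s j ^ 2) :
    frobSq (diagonal (fun j => √(s j ^ 2 - δ)) * Yᵀ)
      = frobSq (Z * diagonal s * Yᵀ) - m * δ := by
  rw [Matrix.mul_assoc, frobSq_mul_of_orthogonal hZ, frobSq_diagonal_mul_transpose hY,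
    frobSq_diagonal_mul_transpose hY]
  simp_rw [Real.sq_sqrt (sub_nonneg.2 (hδ _))]
  simp [Finset.sum_sub_distrib]

lemma sqNorm_shrink_mulVec (hZ : Zᵀ * Z = 1) (hδ : ∀ j, δ ≤ s j ^ 2) (x : Fin d → ℝ) :
    sqNorm ((diagonal (fun j => √(s j ^ 2 - δ)) * Yᵀ) *ᵥ x)
      = sqNorm ((Z * diagonal s * Yᵀ) *ᵥ x) - δ * sqNorm (Yᵀ *ᵥ x) := by
  rw [Matrix.mul_assoc, ← mulVec_mulVec x Z, sqNorm_mulVec_of_orthogonal hZ,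
    sqNorm_diagonal_mul_mulVec, sqNorm_diagonal_mul_mulVec, sqNorm, Finset.mul_sum,
    ← Finset.sum_sub_distrib]
  simp_rw [Real.sq_sqrt (sub_nonneg.2 (hδ _))]
  exact Finset.sum_congr rfl fun j _ => by ring

lemma frobSq_shrink_of_svd_updateRow (hQk : Q k = 0) (hZ : Zᵀ * Z = 1) (hY : Yᵀ * Y = 1)
    (hSVD : Q.updateRow k a = Z * diagonal s * Yᵀ) (hδ : ∀ j, δ ≤ s j ^ 2) :
    frobSq (diagonal (fun j => √(s j ^ 2 - δ)) * Yᵀ) = frobSq Q + (sqNorm a - m * δ) := by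
  rw [frobSq_shrink hZ hY hδ, ← hSVD, frobSq_updateRow_of_row_eq_zero hQk]
  ring

lemma sqNorm_shrink_mulVec_of_svd_updateRow (hQk : Q k = 0) (hZ : Zᵀ * Z = 1)
    (hSVD : Q.updateRow k a = Z * diagonal s * Yᵀ) (hδ : ∀ j, δ ≤ s j ^ 2) (x : Fin d → ℝ) :
    sqNorm ((diagonal (fun j => √(s j ^ 2 - δ)) * Yᵀ) *ᵥ x)
      = sqNorm (Q *ᵥ x) + ((a ⬝ᵥ x) ^ 2 - δ * sqNorm (Yᵀ *ᵥ x)) := by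
  rw [sqNorm_shrink_mulVec hZ hδ, ← hSVD, sqNorm_updateRow_mulVec_of_row_eq_zero hQk]
  ring

end Shrink

/-- Let `Q = Qⁿ` be the output of the Frequent Directions algorithm run on an
`n × d` matrix `A` with parameter `ℓ`, and let `Δ = ∑_{i=1}^n δ_i`.  Then
`ℓ Δ = ‖A‖_F² - ‖Q‖_F²`, and for every unit vector `x ∈ ℝ^d`,
`0 ≤ ‖Ax‖² - ‖Qx‖² ≤ ‖A‖_F² / ℓ`. -/
theorem fd_frobenius_invariant
    (n d ℓ : ℕ) (hℓ : 0 < ℓ)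
    (A : Matrix (Fin n) (Fin d) ℝ)
    (Q : Fin (n + 1) → Matrix (Fin ℓ) (Fin d) ℝ)
    (C : Fin n → Matrix (Fin ℓ) (Fin d) ℝ)
    (Z : Fin n → Matrix (Fin ℓ) (Fin ℓ) ℝ)
    (Y : Fin n → Matrix (Fin d) (Fin ℓ) ℝ)
    (s : Fin n → Fin ℓ → ℝ) (δ : Fin n → ℝ)
    -- the algorithm starts with the zero matrix
    (hQ0 : Q 0 = 0)
    -- `C i` is `Q^{i-1}` with its last row replaced by the `i`-th row of `A`
    (hC : ∀ i : Fin n,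
      C i = (Q i.castSucc).updateRow ⟨ℓ - 1, Nat.sub_lt hℓ Nat.one_pos⟩ (A i))
    -- a singular value decomposition `C i = Z S Yᵀ` of `C i`
    (hZ : ∀ i, (Z i)ᵀ * Z i = 1)
    (hY : ∀ i, (Y i)ᵀ * Y i = 1)
    (hSVD : ∀ i, C i = Z i * Matrix.diagonal (s i) * (Y i)ᵀ)
    (hmono : ∀ i, ∀ j j' : Fin ℓ, j ≤ j' → s i j' ≤ s i j)
    (hnn : ∀ i j, 0 ≤ s i j)
    -- `δ i` is the square of the smallest singular value of `C i`
    (hδ : ∀ i, δ i = s i ⟨ℓ - 1, Nat.sub_lt hℓ Nat.one_pos⟩ ^ 2)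
    -- the shrinking step producing `Q^i = S' Yᵀ`
    (hQs : ∀ i : Fin n,
      Q i.succ = Matrix.diagonal (fun j => Real.sqrt (s i j ^ 2 - δ i)) * (Y i)ᵀ)
 :
    (ℓ : ℝ) * (∑ i, δ i) = frobSq A - frobSq (Q (Fin.last n)) ∧
    ∀ x : Fin d → ℝ, sqNorm x = 1 →
      0 ≤ sqNorm (A.mulVec x) - sqNorm ((Q (Fin.last n)).mulVec x) ∧
      sqNorm (A.mulVec x) - sqNorm ((Q (Fin.last n)).mulVec x) ≤
        frobSq A / (ℓ : ℝ) := by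
  set k₀ : Fin ℓ := ⟨ℓ - 1, Nat.sub_lt hℓ Nat.one_pos⟩
  have hδ_le : ∀ i j, δ i ≤ s i j ^ 2 := fun i j => by
    rw [hδ i]
    exact pow_le_pow_left₀ (hnn i k₀) (hmono i j k₀ (Nat.le_sub_one_of_lt j.2)) 2
  have hδ_nonneg : ∀ i, 0 ≤ δ i := fun i => hδ i ▸ sq_nonneg _
  have hQ_row : ∀ t, Q t k₀ = 0 := Fin.cases (by rw [hQ0]; rfl) fun i => by
    rw [hQs i]; exact diagonal_mul_row_eq_zero (by simp [hδ i]) _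
  have hsvd : ∀ i, (Q i.castSucc).updateRow k₀ (A i) = Z i * diagonal (s i) * (Y i)ᵀ :=
    fun i => (hC i).symm.trans (hSVD i)
  have hfrob : frobSq (Q (Fin.last n)) = ∑ i, (sqNorm (A i) - ℓ * δ i) :=
    Fin.last_eq_sum_of_succ (f := fun t => frobSq (Q t)) (by simp [hQ0, frobSq]) fun i => by
      rw [hQs i]; exact frobSq_shrink_of_svd_updateRow (hQ_row _) (hZ i) (hY i) (hsvd i) (hδ_le i)
  have hΔ : ℓ * ∑ i, δ i = frobSq A - frobSq (Q (Fin.last n)) := by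
    rw [hfrob, Finset.sum_sub_distrib, ← Finset.mul_sum, frobSq_eq_sum_sqNorm]; ring
  refine ⟨hΔ, fun x hx => ?_⟩
  have hQx : sqNorm (Q (Fin.last n) *ᵥ x)
      = ∑ i, ((A i ⬝ᵥ x) ^ 2 - δ i * sqNorm ((Y i)ᵀ *ᵥ x)) :=
    Fin.last_eq_sum_of_succ (f := fun t => sqNorm (Q t *ᵥ x)) (by simp [hQ0, sqNorm]) fun i => by
      rw [hQs i]; exact sqNorm_shrink_mulVec_of_svd_updateRow (hQ_row _) (hZ i) (hsvd i) (hδ_le i) x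
  have herr : sqNorm (A *ᵥ x) - sqNorm (Q (Fin.last n) *ᵥ x)
      = ∑ i, δ i * sqNorm ((Y i)ᵀ *ᵥ x) := by
    rw [hQx, Finset.sum_sub_distrib, sqNorm_mulVec_eq_sum]; ring
  have hbessel : ∀ i, sqNorm ((Y i)ᵀ *ᵥ x) ≤ 1 := fun i =>
    hx ▸ sqNorm_transpose_mulVec_le (hY i) x
  rw [herr]
  refine ⟨Finset.sum_nonneg fun i _ => mul_nonneg (hδ_nonneg i) (sqNorm_nonneg _), ?_⟩
  calc ∑ i, δ i * sqNorm ((Y i)ᵀ *ᵥ x)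
      ≤ ∑ i, δ i := Finset.sum_le_sum fun i _ => mul_le_of_le_one_right (hδ_nonneg i) (hbessel i)
    _ ≤ frobSq A / ℓ := by
      rw [le_div_iff₀' (by positivity)]; linarith [frobSq_nonneg (Q (Fin.last n))]
end
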